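/- arXiv:2405.14546 — 8 statements merged into one kernel-verified Lean document; each statement's English description precedes it below -/
import Mathlib

section
/- Let t ↦ (X(t), y(t)) be a differentiable trajectory of the replicator dynamics with all entries of X(t) and y(t) positive, and let (x*, y*) be an interior Nash equilibrium with value u*. Then at every time t, the time derivative of the conditional-sum divergence satisfies d/dt D(X(t), y(t)) = −dyᵀ X(t)ᵀ U dy, where dy = y(t) − y*. -/
open Finset

/-!
Along the replicator dynamics `ṗ_k = p_k (g_k − Σ_l p_l g_l)` the relative entropy of a fixed
mixed strategy `q` changes at rate `d/dt D_KL(q ‖ p) = p·g − q·g`. Applying this to every column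
`x_j` (fitness `y_j (U y)_i`) and to `y` (fitness `−h_j`), the equilibrium identities
`x*ᵀ U = u* 𝟙` and `U y* = u* 𝟙` make every `u*` cancel, and what remains is
`Σ_j y*_j x_jᵀ U y − Σ_j y_j x_jᵀ U y = −Σ_j (y_j − y*_j) x_jᵀ U (y − y*)`.
-/

theorem HasDerivAt.const_mul_log_const_div {f : ℝ → ℝ} {f' t : ℝ} (c : ℝ)
    (hf : HasDerivAt f f' t) (ht : f t ≠ 0) :
    HasDerivAt (fun s => c * Real.log (c / f s)) (-(c * (f' / f t))) t := by
  rcases eq_or_ne c 0 with rfl | hc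
  · simpa using hasDerivAt_const t (0 : ℝ)
  refine (((hasDerivAt_const t c).fun_div hf ht).log (div_ne_zero hc ht)).const_mul c
    |>.congr_deriv ?_
  field_simp
  ring

theorem hasDerivAt_relEntropy_of_replicator {ι : Type*} [Fintype ι] {p : ℝ → ι → ℝ}
    {q g : ι → ℝ} {t : ℝ}
    (hp : ∀ k, HasDerivAt (fun s => p s k) (p t k * (g k - ∑ l, p t l * g l)) t)
    (hpt : ∀ k, p t k ≠ 0) (hq : ∑ k, q k = 1) :
    HasDerivAt (fun s => ∑ k, q k * Real.log (q k / p s k))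
      (∑ k, p t k * g k - ∑ k, q k * g k) t := by
  refine (HasDerivAt.fun_sum fun k _ => (hp k).const_mul_log_const_div (q k) (hpt k))
    |>.congr_deriv ?_
  have hrate : ∀ k, p t k * (g k - ∑ l, p t l * g l) / p t k = g k - ∑ l, p t l * g l :=
    fun k => mul_div_cancel_left₀ _ (hpt k)
  simp only [hrate]
  simp only [mul_sub, sum_neg_distrib, sum_sub_distrib, ← sum_mul, hq]
  ring

section Bilinear

variable {ι κ : Type*} [Fintype ι] [Fintype κ]

theorem sum_mul_sum_mul_comm (A : ι → κ → ℝ) (p : ι → ℝ) (q : κ → ℝ) :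
    ∑ i, p i * ∑ j, A i j * q j = ∑ j, q j * ∑ i, A i j * p i := by
  simp only [mul_sum]
  rw [sum_comm]
  exact sum_congr rfl fun _ _ => sum_congr rfl fun _ _ => by ring

theorem sum_mul_sum_mul_eq_of_forall_sum_eq {A : ι → κ → ℝ} {p : ι → ℝ} {q : κ → ℝ} {c : ℝ}
    (hA : ∀ j, ∑ i, A i j * p i = c) (hq : ∑ j, q j = 1) :
    ∑ i, p i * ∑ j, A i j * q j = c := by
  simp only [sum_mul_sum_mul_comm A p q, hA, ← sum_mul, hq, one_mul]

theorem sum_sum_mul_eq_one {X : ι → κ → ℝ} {y : κ → ℝ} (hX : ∀ j, ∑ i, X i j = 1)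
    (hy : ∑ j, y j = 1) : ∑ i, ∑ j, X i j * y j = 1 := by
  rw [sum_comm]
  simp only [← sum_mul, hX, one_mul, hy]

end Bilinear

theorem replicator_divergence_rate_eq {ι κ : Type*} [Fintype ι] [Fintype κ]
    (U X : ι → κ → ℝ) (y ys : κ → ℝ) (xs : ι → ℝ) (u : ℝ)
    (hX : ∀ j, ∑ i, X i j = 1) (hy : ∑ j, y j = 1)
    (hys : ∑ j, ys j = 1)
    (hNx : ∀ j, ∑ i, U i j * xs i = u) (hNy : ∀ i, ∑ j, U i j * ys j = u) :
    (∑ j, (∑ i, X i j * (y j * ∑ j', U i j' * y j') - ∑ i, xs i * (y j * ∑ j', U i j' * y j')))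
      + (∑ j, y j * -((∑ i, U i j * ∑ j', X i j' * y j') + ∑ i, X i j * ∑ j', U i j' * y j')
        - ∑ j, ys j * -((∑ i, U i j * ∑ j', X i j' * y j') + ∑ i, X i j * ∑ j', U i j' * y j'))
      = -(∑ j, ∑ j', (y j - ys j) * (∑ i, X i j * U i j') * (y j' - ys j')) := by
  have hxsw : ∑ i, xs i * ∑ j', U i j' * y j' = u := sum_mul_sum_mul_eq_of_forall_sum_eq hNx hy
  have hysxst : ∑ j, ys j * ∑ i, U i j * ∑ j', X i j' * y j' = u :=
    sum_mul_sum_mul_eq_of_forall_sum_eq (A := fun j i => U i j) hNy (sum_sum_mul_eq_one hX hy)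
  have hyxst : ∑ j, y j * ∑ i, U i j * ∑ j', X i j' * y j'
      = ∑ j, y j * ∑ i, X i j * ∑ j', U i j' * y j' := by
    rw [← sum_mul_sum_mul_comm U _ y, sum_mul_sum_mul_comm (fun j i => X i j) y _]
    exact sum_congr rfl fun _ _ => mul_comm _ _
  have hXpart : ∀ j, ∑ i, X i j * (y j * ∑ j', U i j' * y j')
      - ∑ i, xs i * (y j * ∑ j', U i j' * y j')
      = y j * ∑ i, X i j * ∑ j', U i j' * y j' - y j * u := by
    intro j
    simp only [mul_left_comm _ (y j), ← mul_sum, hxsw]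
  have hform : ∀ j, ∑ j', (∑ i, X i j * U i j') * (y j' - ys j')
      = ∑ i, X i j * ∑ j', U i j' * y j' - u := by
    intro j
    calc ∑ j', (∑ i, X i j * U i j') * (y j' - ys j')
        = ∑ i, X i j * ∑ j', U i j' * (y j' - ys j') := by
          simp only [sum_mul, mul_sum]
          rw [sum_comm]
          exact sum_congr rfl fun _ _ => sum_congr rfl fun _ _ => by ring
      _ = _ := by simp only [mul_sub, sum_sub_distrib, hNy, ← sum_mul, hX, one_mul]
  calc _ = ∑ j, ys j * ∑ i, X i j * ∑ j', U i j' * y j'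
        - ∑ j, y j * ∑ i, X i j * ∑ j', U i j' * y j' := by
        simp only [hXpart, sum_sub_distrib, ← sum_mul, hy, mul_neg, mul_add, sum_neg_distrib,
          sum_add_distrib, hysxst, hyxst]
        ring
    _ = _ := by
        simp only [mul_assoc, ← mul_sum, hform]
        simp only [mul_sub, sub_mul, sum_sub_distrib, ← sum_mul, hy, hys]
        ring

theorem stmt_3_general (mX mY : ℕ) (U : Fin mX → Fin mY → ℝ)
    (X : ℝ → Fin mX → Fin mY → ℝ) (Y : ℝ → Fin mY → ℝ)
    (hXpos : ∀ t i j, 0 < X t i j) (hYpos : ∀ t j, 0 < Y t j)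
    (hXsum : ∀ t j, ∑ i : Fin mX, X t i j = 1) (hYsum : ∀ t, ∑ j : Fin mY, Y t j = 1)
    -- replicator dynamics of X : ẋ_{i|j} = x_{i|j}(g_{ij} − Σ_{i'} x_{i'|j} g_{i'j}),
    -- g_{ij} = y_j Σ_{j'} u_{ij'} y_{j'}
    (hX : ∀ t i j, HasDerivAt (fun s => X s i j)
      (X t i j * ((Y t j * ∑ j' : Fin mY, U i j' * Y t j') -
        ∑ i' : Fin mX, X t i' j * (Y t j * ∑ j' : Fin mY, U i' j' * Y t j'))) t)
    -- replicator dynamics of Y : ẏ_j = −y_j(h_j − Σ_{j'} y_{j'} h_{j'}),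
    -- h_j = Σ_i u_{ij} x_i^st + Σ_i x_{i|j} Σ_{j'} u_{ij'} y_{j'}
    (hY : ∀ t j, HasDerivAt (fun s => Y s j)
      (-(Y t j * (((∑ i : Fin mX, U i j * (∑ j' : Fin mY, X t i j' * Y t j')) +
          ∑ i : Fin mX, X t i j * ∑ j' : Fin mY, U i j' * Y t j') -
        ∑ j₂ : Fin mY, Y t j₂ *
          ((∑ i : Fin mX, U i j₂ * (∑ j' : Fin mY, X t i j' * Y t j')) +
            ∑ i : Fin mX, X t i j₂ * ∑ j' : Fin mY, U i j' * Y t j')))) t)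
    -- interior Nash equilibrium (x*, y*) with value u*
    (xs : Fin mX → ℝ) (ys : Fin mY → ℝ) (ustar : ℝ)
    (hxssum : ∑ i : Fin mX, xs i = 1)
    (hyssum : ∑ j : Fin mY, ys j = 1)
    (hNx : ∀ j, ∑ i : Fin mX, U i j * xs i = ustar)
    (hNy : ∀ i, ∑ j : Fin mY, U i j * ys j = ustar)
    (t : ℝ) :
    HasDerivAt
      (fun s => (∑ j : Fin mY, ∑ i : Fin mX, xs i * Real.log (xs i / X s i j)) +
        ∑ j : Fin mY, ys j * Real.log (ys j / Y s j))
      (-(∑ j : Fin mY, ∑ j' : Fin mY,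
        (Y t j - ys j) * (∑ i : Fin mX, X t i j * U i j') * (Y t j' - ys j'))) t := by
  have hcol : ∀ j, HasDerivAt (fun s => ∑ i, xs i * Real.log (xs i / X s i j))
      (∑ i, X t i j * (Y t j * ∑ j', U i j' * Y t j')
        - ∑ i, xs i * (Y t j * ∑ j', U i j' * Y t j')) t := fun j =>
    hasDerivAt_relEntropy_of_replicator (p := fun s i => X s i j)
      (g := fun i => Y t j * ∑ j', U i j' * Y t j') (fun i => hX t i j)
      (fun i => (hXpos t i j).ne') hxssum
  have hrow := hasDerivAt_relEntropy_of_replicator (p := Y) (q := ys)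
    (g := fun j => -((∑ i, U i j * ∑ j', X t i j' * Y t j') + ∑ i, X t i j * ∑ j', U i j' * Y t j'))
    (fun j => (hY t j).congr_deriv (by simp only [mul_neg, sum_neg_distrib]; ring))
    (fun j => (hYpos t j).ne') hyssum
  refine ((HasDerivAt.fun_sum fun j _ => hcol j).fun_add hrow).congr_deriv ?_
  exact replicator_divergence_rate_eq U (X t) (Y t) ys xs ustar (hXsum t) (hYsum t) hyssum hNx hNy

/-- Along a differentiable trajectory of the replicator dynamics with positive
entries, the time derivative of the conditional-sum divergence
`D(X,y) = Σ_j D_KL(x* ‖ x_j) + D_KL(y* ‖ y)` equals `−dyᵀ Xᵀ U dy`, where `dy = y(t) − y*`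
and `(x*, y*)` is an interior Nash equilibrium with value `u*`. -/
theorem stmt_3 (mX mY : ℕ) (U : Fin mX → Fin mY → ℝ)
    (X : ℝ → Fin mX → Fin mY → ℝ) (Y : ℝ → Fin mY → ℝ)
    (hXpos : ∀ t i j, 0 < X t i j) (hYpos : ∀ t j, 0 < Y t j)
    (hXsum : ∀ t j, ∑ i : Fin mX, X t i j = 1) (hYsum : ∀ t, ∑ j : Fin mY, Y t j = 1)
    -- replicator dynamics of X : ẋ_{i|j} = x_{i|j}(g_{ij} − Σ_{i'} x_{i'|j} g_{i'j}),
    -- g_{ij} = y_j Σ_{j'} u_{ij'} y_{j'}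
    (hX : ∀ t i j, HasDerivAt (fun s => X s i j)
      (X t i j * ((Y t j * ∑ j' : Fin mY, U i j' * Y t j') -
        ∑ i' : Fin mX, X t i' j * (Y t j * ∑ j' : Fin mY, U i' j' * Y t j'))) t)
    -- replicator dynamics of Y : ẏ_j = −y_j(h_j − Σ_{j'} y_{j'} h_{j'}),
    -- h_j = Σ_i u_{ij} x_i^st + Σ_i x_{i|j} Σ_{j'} u_{ij'} y_{j'}
    (hY : ∀ t j, HasDerivAt (fun s => Y s j)
      (-(Y t j * (((∑ i : Fin mX, U i j * (∑ j' : Fin mY, X t i j' * Y t j')) +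
          ∑ i : Fin mX, X t i j * ∑ j' : Fin mY, U i j' * Y t j') -
        ∑ j₂ : Fin mY, Y t j₂ *
          ((∑ i : Fin mX, U i j₂ * (∑ j' : Fin mY, X t i j' * Y t j')) +
            ∑ i : Fin mX, X t i j₂ * ∑ j' : Fin mY, U i j' * Y t j')))) t)
    -- interior Nash equilibrium (x*, y*) with value u*
    (xs : Fin mX → ℝ) (ys : Fin mY → ℝ) (ustar : ℝ)
    (hxspos : ∀ i, 0 < xs i) (hxssum : ∑ i : Fin mX, xs i = 1)
    (hyspos : ∀ j, 0 < ys j) (hyssum : ∑ j : Fin mY, ys j = 1)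
    (hNx : ∀ j, ∑ i : Fin mX, U i j * xs i = ustar)
    (hNy : ∀ i, ∑ j : Fin mY, U i j * ys j = ustar)
    (t : ℝ) :
    HasDerivAt
      (fun s => (∑ j : Fin mY, ∑ i : Fin mX, xs i * Real.log (xs i / X s i j)) +
        ∑ j : Fin mY, ys j * Real.log (ys j / Y s j))
      (-(∑ j : Fin mY, ∑ j' : Fin mY,
        (Y t j - ys j) * (∑ i : Fin mX, X t i j * U i j') * (Y t j' - ys j'))) t :=
  stmt_3_general mX mY U X Y hXpos hYpos hXsum hYsum hX hY xs ys ustar hxssum hyssum hNx hNy t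
end

section
/- (Theorem 1.) Let t ↦ (X(t), y(t)) be a differentiable trajectory of the replicator dynamics with all entries of X(t) and y(t) positive, and let (x*, y*) be an interior Nash equilibrium with value u*. If at time t the matrix X(t)ᵀU is positive definite for zero-sum vectors and y(t) ≠ y*, then d/dt D(X(t), y(t)) < 0. -/
/-!
Each summand `D_KL(q ‖ p)` of the divergence evolves along a replicator field
`ṗ_k = p_k (f_k - p·f)` at rate `(p - q)·f`. Adding these rates for the columns of `X` and for
`y`, the Nash conditions `x*ᵀU = u*·1`, `Uy* = u*·1` and the column sums of `X` collapse the total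
to `-δᵀ(XᵀU)δ` with `δ = y - y*`, a zero-sum vector that is nonzero when `y ≠ y*`.
-/

open Real Finset Matrix

theorem hasDerivAt_mul_log_div {p : ℝ → ℝ} {p' t : ℝ} (q : ℝ) (hp : HasDerivAt p p' t)
    (hpt : p t ≠ 0) : HasDerivAt (fun s => q * log (q / p s)) (-(q * (p' / p t))) t := by
  refine (((hp.log hpt).const_mul q).const_sub (q * log q)).congr_of_eventuallyEq ?_
  filter_upwards [hp.continuousAt.eventually_ne hpt] with s hs
  rcases eq_or_ne q 0 with rfl | hq
  · simp
  · rw [log_div hq hs, mul_sub]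

theorem hasDerivAt_sum_mul_log_div_of_replicator {ι : Type*} [Fintype ι] {p : ℝ → ι → ℝ}
    {f : ι → ℝ} {t : ℝ} (q : ι → ℝ) (hq : ∑ k, q k = 1) (hpt : ∀ k, p t k ≠ 0)
    (hp : ∀ k, HasDerivAt (fun s => p s k) (p t k * (f k - ∑ l, p t l * f l)) t) :
    HasDerivAt (fun s => ∑ k, q k * log (q k / p s k)) (∑ k, (p t k - q k) * f k) t := by
  refine (HasDerivAt.fun_sum fun k _ => hasDerivAt_mul_log_div (q k) (hp k) (hpt k)).congr_deriv ?_
  simp only [mul_div_cancel_left₀ _ (hpt _)]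
  simp only [mul_sub, sub_mul, sum_sub_distrib, ← sum_mul, hq, one_mul, neg_sub]

theorem hasDerivAt_sum_mul_log_div_of_neg_replicator {ι : Type*} [Fintype ι] {p : ℝ → ι → ℝ}
    {h : ι → ℝ} {t : ℝ} (q : ι → ℝ) (hq : ∑ k, q k = 1) (hpt : ∀ k, p t k ≠ 0)
    (hp : ∀ k, HasDerivAt (fun s => p s k) (-(p t k * (h k - ∑ l, p t l * h l))) t) :
    HasDerivAt (fun s => ∑ k, q k * log (q k / p s k)) (∑ k, (q k - p t k) * h k) t := by
  refine (hasDerivAt_sum_mul_log_div_of_replicator (f := -h) q hq hpt fun k =>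
    (hp k).congr_deriv ?_).congr_deriv ?_
  · simp only [Pi.neg_apply, mul_neg, sum_neg_distrib]
    ring
  · simp only [Pi.neg_apply, mul_neg, ← neg_mul, neg_sub]

section

variable {m n R : Type*} [Fintype m] [Fintype n] [CommRing R]

theorem sum_sum_sub_mul_mul (A : Matrix m n R) (x : m → R) (y : n → R) (w : m → R) :
    ∑ j, ∑ i, (A i j - x i) * (y j * w i) = y ⬝ᵥ (Aᵀ *ᵥ w) - (∑ j, y j) * (x ⬝ᵥ w) := by
  simp only [dotProduct, mulVec, transpose_apply]
  rw [sum_mul_sum, ← sum_sub_distrib]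
  refine sum_congr rfl fun j _ => ?_
  rw [mul_sum, ← sum_sub_distrib]
  exact sum_congr rfl fun i _ => by ring

theorem replicator_rate_eq_neg_quadForm {A U : Matrix m n R} {x : m → R} {y ys : n → R} {u : R}
    (hA : 1 ᵥ* A = 1) (hy : ∑ j, y j = 1) (hys : ∑ j, ys j = 1)
    (hUx : Uᵀ *ᵥ x = u • 1) (hUys : U *ᵥ ys = u • 1) :
    (∑ j, ∑ i, (A i j - x i) * (y j * (U *ᵥ y) i)) +
        (ys - y) ⬝ᵥ (Uᵀ *ᵥ (A *ᵥ y) + Aᵀ *ᵥ (U *ᵥ y)) =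
      -((y - ys) ⬝ᵥ ((Aᵀ * U) *ᵥ (y - ys))) := by
  have hsum_Ay : ∑ i, (A *ᵥ y) i = 1 := by
    rw [← one_dotProduct, dotProduct_mulVec, hA, one_dotProduct, hy]
  have hX : ∑ j, ∑ i, (A i j - x i) * (y j * (U *ᵥ y) i) = y ⬝ᵥ (Aᵀ *ᵥ (U *ᵥ y)) - u := by
    rw [sum_sum_sub_mul_mul, hy, dotProduct_mulVec x, ← mulVec_transpose, hUx, smul_dotProduct,
      one_dotProduct, hy, smul_eq_mul, mul_one, one_mul]
  have hY : (y - ys) ⬝ᵥ (Uᵀ *ᵥ (A *ᵥ y)) = y ⬝ᵥ (Aᵀ *ᵥ (U *ᵥ y)) - u := by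
    rw [dotProduct_mulVec, vecMul_transpose, mulVec_sub, hUys, sub_dotProduct, smul_dotProduct,
      one_dotProduct, hsum_Ay, dotProduct_comm y, dotProduct_mulVec, ← mulVec_transpose,
      dotProduct_comm, smul_eq_mul, mul_one]
  have hQ : (y - ys) ⬝ᵥ ((Aᵀ * U) *ᵥ (y - ys)) = (y - ys) ⬝ᵥ (Aᵀ *ᵥ (U *ᵥ y)) := by
    rw [← mulVec_mulVec, mulVec_sub, hUys, mulVec_sub, mulVec_smul, mulVec_transpose A 1, hA,
      dotProduct_sub (y - ys), dotProduct_smul, dotProduct_one]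
    simp only [Pi.sub_apply, sum_sub_distrib, hy, hys, sub_self, smul_zero, sub_zero]
  rw [hX, dotProduct_add, ← neg_sub y, neg_dotProduct, neg_dotProduct, hY, hQ, sub_dotProduct]
  ring

theorem sum_sum_mul_mul_eq_dotProduct_mulVec (M : Matrix m n R) (u : m → R) (v : n → R) :
    ∑ i, ∑ j, u i * M i j * v j = u ⬝ᵥ (M *ᵥ v) := by
  simp only [dotProduct, mulVec, mul_sum, mul_assoc]

end

theorem stmt_4_general (mX mY : ℕ) (U : Fin mX → Fin mY → ℝ)
    (X : ℝ → Fin mX → Fin mY → ℝ) (Y : ℝ → Fin mY → ℝ)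
    (hXpos : ∀ t i j, 0 < X t i j) (hYpos : ∀ t j, 0 < Y t j)
    (hXsum : ∀ t j, ∑ i : Fin mX, X t i j = 1) (hYsum : ∀ t, ∑ j : Fin mY, Y t j = 1)
    -- replicator dynamics of X
    (hX : ∀ t i j, HasDerivAt (fun s => X s i j)
      (X t i j * ((Y t j * ∑ j' : Fin mY, U i j' * Y t j') -
        ∑ i' : Fin mX, X t i' j * (Y t j * ∑ j' : Fin mY, U i' j' * Y t j'))) t)
    -- replicator dynamics of Y
    (hY : ∀ t j, HasDerivAt (fun s => Y s j)
      (-(Y t j * (((∑ i : Fin mX, U i j * (∑ j' : Fin mY, X t i j' * Y t j')) +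
          ∑ i : Fin mX, X t i j * ∑ j' : Fin mY, U i j' * Y t j') -
        ∑ j₂ : Fin mY, Y t j₂ *
          ((∑ i : Fin mX, U i j₂ * (∑ j' : Fin mY, X t i j' * Y t j')) +
            ∑ i : Fin mX, X t i j₂ * ∑ j' : Fin mY, U i j' * Y t j')))) t)
    -- interior Nash equilibrium (x*, y*) with value u*
    (xs : Fin mX → ℝ) (ys : Fin mY → ℝ) (ustar : ℝ)
    (hxssum : ∑ i : Fin mX, xs i = 1) (hyssum : ∑ j : Fin mY, ys j = 1)
    (hNx : ∀ j, ∑ i : Fin mX, U i j * xs i = ustar)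
    (hNy : ∀ i, ∑ j : Fin mY, U i j * ys j = ustar)
    (t : ℝ)
    -- X(t)ᵀU is positive definite for zero-sum vectors
    (hPD : ∀ δ : Fin mY → ℝ, δ ≠ 0 → (∑ j : Fin mY, δ j) = 0 →
      0 < ∑ j : Fin mY, ∑ j' : Fin mY, δ j * (∑ i : Fin mX, X t i j * U i j') * δ j')
    -- y(t) ≠ y*
    (hne : Y t ≠ ys) :
    deriv (fun s => (∑ j : Fin mY, ∑ i : Fin mX, xs i * Real.log (xs i / X s i j)) +
      ∑ j : Fin mY, ys j * Real.log (ys j / Y s j)) t < 0 := by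
  have hDX : HasDerivAt (fun s => ∑ j : Fin mY, ∑ i : Fin mX, xs i * log (xs i / X s i j))
      (∑ j, ∑ i, (X t i j - xs i) * (Y t j * (U *ᵥ Y t) i)) t :=
    HasDerivAt.fun_sum fun j _ => hasDerivAt_sum_mul_log_div_of_replicator (p := fun s i => X s i j)
      xs hxssum (fun i => (hXpos t i j).ne') fun i => hX t i j
  have hDY : HasDerivAt (fun s => ∑ j : Fin mY, ys j * log (ys j / Y s j))
      ((ys - Y t) ⬝ᵥ (Uᵀ *ᵥ (X t *ᵥ Y t) + (X t)ᵀ *ᵥ (U *ᵥ Y t))) t :=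
    hasDerivAt_sum_mul_log_div_of_neg_replicator ys hyssum (fun j => (hYpos t j).ne') (hY t)
  have hA : 1 ᵥ* X t = 1 := funext fun j => by simpa [vecMul, dotProduct] using hXsum t j
  have hUx : Uᵀ *ᵥ xs = ustar • 1 := funext fun j => by
    rw [Pi.smul_apply, Pi.one_apply, smul_eq_mul, mul_one]
    exact hNx j
  have hUys : U *ᵥ ys = ustar • 1 := funext fun i => by
    rw [Pi.smul_apply, Pi.one_apply, smul_eq_mul, mul_one]
    exact hNy i
  have hδ : Y t - ys ≠ 0 := sub_ne_zero.mpr hne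
  have hδsum : ∑ j, (Y t - ys) j = 0 := by simp [sum_sub_distrib, hYsum t, hyssum]
  calc deriv _ t = _ := (hDX.add hDY).deriv
    _ = _ := replicator_rate_eq_neg_quadForm hA (hYsum t) hyssum hUx hUys
    _ < 0 := by
      rw [neg_lt_zero, ← sum_sum_mul_mul_eq_dotProduct_mulVec]
      exact hPD _ hδ hδsum

/-- Theorem 1: Along a differentiable trajectory of the replicator dynamics
with positive entries, if at time `t` the matrix `X(t)ᵀU` is positive definite for zero-sum
vectors and `y(t) ≠ y*`, then `d/dt D(X(t), y(t)) < 0`, where `D` is the conditional-sum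
divergence and `(x*, y*)` is an interior Nash equilibrium with value `u*`. -/
theorem stmt_4 (mX mY : ℕ) (U : Fin mX → Fin mY → ℝ)
    (X : ℝ → Fin mX → Fin mY → ℝ) (Y : ℝ → Fin mY → ℝ)
    (hXpos : ∀ t i j, 0 < X t i j) (hYpos : ∀ t j, 0 < Y t j)
    (hXsum : ∀ t j, ∑ i : Fin mX, X t i j = 1) (hYsum : ∀ t, ∑ j : Fin mY, Y t j = 1)
    -- replicator dynamics of X
    (hX : ∀ t i j, HasDerivAt (fun s => X s i j)
      (X t i j * ((Y t j * ∑ j' : Fin mY, U i j' * Y t j') -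
        ∑ i' : Fin mX, X t i' j * (Y t j * ∑ j' : Fin mY, U i' j' * Y t j'))) t)
    -- replicator dynamics of Y
    (hY : ∀ t j, HasDerivAt (fun s => Y s j)
      (-(Y t j * (((∑ i : Fin mX, U i j * (∑ j' : Fin mY, X t i j' * Y t j')) +
          ∑ i : Fin mX, X t i j * ∑ j' : Fin mY, U i j' * Y t j') -
        ∑ j₂ : Fin mY, Y t j₂ *
          ((∑ i : Fin mX, U i j₂ * (∑ j' : Fin mY, X t i j' * Y t j')) +
            ∑ i : Fin mX, X t i j₂ * ∑ j' : Fin mY, U i j' * Y t j')))) t)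
    -- interior Nash equilibrium (x*, y*) with value u*
    (xs : Fin mX → ℝ) (ys : Fin mY → ℝ) (ustar : ℝ)
    (hxspos : ∀ i, 0 < xs i) (hxssum : ∑ i : Fin mX, xs i = 1)
    (hyspos : ∀ j, 0 < ys j) (hyssum : ∑ j : Fin mY, ys j = 1)
    (hNx : ∀ j, ∑ i : Fin mX, U i j * xs i = ustar)
    (hNy : ∀ i, ∑ j : Fin mY, U i j * ys j = ustar)
    (t : ℝ)
    -- X(t)ᵀU is positive definite for zero-sum vectors
    (hPD : ∀ δ : Fin mY → ℝ, δ ≠ 0 → (∑ j : Fin mY, δ j) = 0 →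
      0 < ∑ j : Fin mY, ∑ j' : Fin mY, δ j * (∑ i : Fin mX, X t i j * U i j') * δ j')
    -- y(t) ≠ y*
    (hne : Y t ≠ ys) :
    deriv (fun s => (∑ j : Fin mY, ∑ i : Fin mX, xs i * Real.log (xs i / X s i j)) +
      ∑ j : Fin mY, ys j * Real.log (ys j / Y s j)) t < 0 :=
  stmt_4_general mX mY U X Y hXpos hYpos hXsum hYsum hX hY xs ys ustar hxssum hyssum hNx hNy t hPD
    hne
end

section
/- Let t ↦ (X(t), y(t)) be a differentiable trajectory of the replicator dynamics with all entries of X(t) and y(t) positive, and let (x*, y*) be an interior Nash equilibrium with value u*. Then for every zero-sum vector δ ∈ ℝ^{m_X}, the time derivative of H satisfies d/dt H(X(t); δ) = (δᵀ U dy)², where dy = y(t) − y*; in particular d/dt H(X(t); δ) ≥ 0. -/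
/-!
Along the replicator dynamics, `d/dt log x_{i|j} = g_{ij} - Σ_{i'} x_{i'|j} g_{i'j}` with
`g_{ij} = y_j (U y)_i`. Pairing with a zero-sum `δ` kills the column baseline, so
`Σ_{i'} δ_{i'} d/dt log x_{i'|j} = y_j · δᵀ U y`, and hence `d/dt H(X; δ) = (δᵀ U y)²`.
Finally `δᵀ U y* = u* Σ_i δ_i = 0` because `y*` equalizes the payoffs of `X`, so
`δᵀ U y = δᵀ U (y - y*)`.
-/

open Finset

section

variable {ι κ : Type*} [Fintype ι] [Fintype κ]

theorem HasDerivAt.log_of_eq_mul {f : ℝ → ℝ} {a x : ℝ} (hf : HasDerivAt f (f x * a) x)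
    (hx : f x ≠ 0) : HasDerivAt (fun s => Real.log (f s)) a x := by
  simpa [mul_div_cancel_left₀ _ hx] using hf.log hx

theorem sum_sub_const_mul_of_sum_eq_zero {δ : ι → ℝ} (hδ : ∑ i, δ i = 0) (a : ι → ℝ) (c : ℝ) :
    ∑ i, (a i - c) * δ i = ∑ i, a i * δ i := by
  simp [sub_mul, sum_sub_distrib, ← mul_sum, hδ]

theorem sum_sum_mul_eq_zero_of_equalizer (U : ι → κ → ℝ) {y : κ → ℝ} {c : ℝ}
    (hy : ∀ i, ∑ j, U i j * y j = c) {δ : ι → ℝ} (hδ : ∑ i, δ i = 0) :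
    ∑ i, ∑ j, δ i * U i j * y j = 0 := by
  calc ∑ i, ∑ j, δ i * U i j * y j = ∑ i, δ i * ∑ j, U i j * y j := by
        simp only [mul_sum, mul_assoc]
    _ = 0 := by simp [hy, ← sum_mul, hδ]

theorem sum_sum_sum_mul_eq_mul_of_contract (U : ι → κ → ℝ) (δ : ι → ℝ) (r : ι → κ → ℝ)
    (y : κ → ℝ) (E : ℝ) (hr : ∀ j, ∑ i', r i' j * δ i' = y j * E) :
    ∑ i, ∑ i', ∑ j, δ i * U i j * r i' j * δ i' = (∑ i, ∑ j, δ i * U i j * y j) * E := by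
  calc ∑ i, ∑ i', ∑ j, δ i * U i j * r i' j * δ i'
      = ∑ i, ∑ j, δ i * U i j * ∑ i', r i' j * δ i' := by
        refine sum_congr rfl fun i _ => ?_
        rw [sum_comm]
        simp only [mul_sum, mul_assoc]
    _ = (∑ i, ∑ j, δ i * U i j * y j) * E := by
        simp only [hr, sum_mul, mul_assoc]

end

theorem stmt_5_general (mX mY : ℕ) (U : Fin mX → Fin mY → ℝ)
    (X : ℝ → Fin mX → Fin mY → ℝ) (Y : ℝ → Fin mY → ℝ)
    (hXpos : ∀ t i j, 0 < X t i j)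
    -- replicator dynamics of X
    (hX : ∀ t i j, HasDerivAt (fun s => X s i j)
      (X t i j * ((Y t j * ∑ j' : Fin mY, U i j' * Y t j') -
        ∑ i' : Fin mX, X t i' j * (Y t j * ∑ j' : Fin mY, U i' j' * Y t j'))) t)
    -- interior Nash equilibrium (x*, y*) with value u*
    (ys : Fin mY → ℝ) (ustar : ℝ)
    (hNy : ∀ i, ∑ j : Fin mY, U i j * ys j = ustar)
    (t : ℝ) (δ : Fin mX → ℝ) (hδ : ∑ i : Fin mX, δ i = 0) :
    HasDerivAt
      (fun s => ∑ i : Fin mX, ∑ i' : Fin mX, ∑ j : Fin mY,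
        δ i * U i j * Real.log (X s i' j) * δ i')
      ((∑ i : Fin mX, ∑ j : Fin mY, δ i * U i j * (Y t j - ys j))^2) t ∧
    0 ≤ (∑ i : Fin mX, ∑ j : Fin mY, δ i * U i j * (Y t j - ys j))^2 := by
  refine ⟨?_, sq_nonneg _⟩
  set g : Fin mX → Fin mY → ℝ := fun i j => Y t j * ∑ j', U i j' * Y t j'
  set E := ∑ i, ∑ j, δ i * U i j * Y t j
  have hlog : ∀ i j, HasDerivAt (fun s => Real.log (X s i j))
      (g i j - ∑ i', X t i' j * g i' j) t := fun i j =>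
    (hX t i j).log_of_eq_mul (hXpos t i j).ne'
  have hderiv := HasDerivAt.fun_sum (u := univ) fun i _ =>
    HasDerivAt.fun_sum (u := univ) fun i' _ => HasDerivAt.fun_sum (u := univ) fun j _ => ((hlog i' j).const_mul (δ i * U i j)).mul_const (δ i')
  have hcontract : ∀ j, ∑ i', (g i' j - ∑ i'', X t i'' j * g i'' j) * δ i' = Y t j * E := by
    intro j
    rw [sum_sub_const_mul_of_sum_eq_zero hδ]
    simp only [g, E, mul_sum, sum_mul]
    exact sum_congr rfl fun i _ => sum_congr rfl fun j' _ => by ring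
  have hcentre : ∑ i, ∑ j, δ i * U i j * (Y t j - ys j) = E := by
    simp only [mul_sub, sum_sub_distrib, sum_sum_mul_eq_zero_of_equalizer U hNy hδ, sub_zero, E]
  have hvalue : ∑ i, ∑ i', ∑ j, δ i * U i j * (g i' j - ∑ i'', X t i'' j * g i'' j) * δ i'
      = E ^ 2 := by
    rw [sum_sum_sum_mul_eq_mul_of_contract U δ _ (Y t) E hcontract, sq]
  rwa [hcentre, ← hvalue]

/-- Along a differentiable trajectory of the replicator dynamics with positive
entries and an interior Nash equilibrium `(x*, y*)` with value `u*`, for every zero-sum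
vector `δ ∈ ℝ^{m_X}`, the time derivative of `H(X;δ) = δᵀ U (log X)ᵀ δ` equals
`(δᵀ U dy)²` with `dy = y(t) − y*`; in particular it is nonnegative. -/
theorem stmt_5 (mX mY : ℕ) (U : Fin mX → Fin mY → ℝ)
    (X : ℝ → Fin mX → Fin mY → ℝ) (Y : ℝ → Fin mY → ℝ)
    (hXpos : ∀ t i j, 0 < X t i j) (hYpos : ∀ t j, 0 < Y t j)
    (hXsum : ∀ t j, ∑ i : Fin mX, X t i j = 1) (hYsum : ∀ t, ∑ j : Fin mY, Y t j = 1)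
    -- replicator dynamics of X
    (hX : ∀ t i j, HasDerivAt (fun s => X s i j)
      (X t i j * ((Y t j * ∑ j' : Fin mY, U i j' * Y t j') -
        ∑ i' : Fin mX, X t i' j * (Y t j * ∑ j' : Fin mY, U i' j' * Y t j'))) t)
    -- replicator dynamics of Y
    (hY : ∀ t j, HasDerivAt (fun s => Y s j)
      (-(Y t j * (((∑ i : Fin mX, U i j * (∑ j' : Fin mY, X t i j' * Y t j')) +
          ∑ i : Fin mX, X t i j * ∑ j' : Fin mY, U i j' * Y t j') -
        ∑ j₂ : Fin mY, Y t j₂ *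
          ((∑ i : Fin mX, U i j₂ * (∑ j' : Fin mY, X t i j' * Y t j')) +
            ∑ i : Fin mX, X t i j₂ * ∑ j' : Fin mY, U i j' * Y t j')))) t)
    -- interior Nash equilibrium (x*, y*) with value u*
    (xs : Fin mX → ℝ) (ys : Fin mY → ℝ) (ustar : ℝ)
    (hxspos : ∀ i, 0 < xs i) (hxssum : ∑ i : Fin mX, xs i = 1)
    (hyspos : ∀ j, 0 < ys j) (hyssum : ∑ j : Fin mY, ys j = 1)
    (hNx : ∀ j, ∑ i : Fin mX, U i j * xs i = ustar)
    (hNy : ∀ i, ∑ j : Fin mY, U i j * ys j = ustar)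
    (t : ℝ) (δ : Fin mX → ℝ) (hδ : ∑ i : Fin mX, δ i = 0) :
    HasDerivAt
      (fun s => ∑ i : Fin mX, ∑ i' : Fin mX, ∑ j : Fin mY,
        δ i * U i j * Real.log (X s i' j) * δ i')
      ((∑ i : Fin mX, ∑ j : Fin mY, δ i * U i j * (Y t j - ys j))^2) t ∧
    0 ≤ (∑ i : Fin mX, ∑ j : Fin mY, δ i * U i j * (Y t j - ys j))^2 :=
  stmt_5_general mX mY U X Y hXpos hX ys ustar hNy t δ hδ
end

section
/- (Theorem 2, equality case.) Let (x*, y*) be an interior Nash equilibrium with value u*, and suppose the Nash equilibrium of the memoryless zero-sum game is unique. Let y ∈ Δ^{m_Y−1} and set dy = y − y*. Then (δᵀ U dy)² = 0 for every zero-sum vector δ ∈ ℝ^{m_X} if and only if y = y*. -/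
lemma dsum1 {m n : ℕ} (U : Fin m → Fin n → ℝ) (a : Fin m → ℝ) (b : Fin n → ℝ) :
    ∑ i, ∑ j, U i j * a i * b j = ∑ i, a i * ∑ j, U i j * b j := by
  refine Finset.sum_congr rfl fun i _ => ?_
  rw [Finset.mul_sum]
  exact Finset.sum_congr rfl fun j _ => by ring

lemma dsum2 {m n : ℕ} (U : Fin m → Fin n → ℝ) (a : Fin m → ℝ) (b : Fin n → ℝ) :
    ∑ i, ∑ j, U i j * a i * b j = ∑ j, b j * ∑ i, U i j * a i := by
  rw [Finset.sum_comm]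
  refine Finset.sum_congr rfl fun j _ => ?_
  rw [Finset.mul_sum]
  exact Finset.sum_congr rfl fun i _ => by ring

/-- Theorem 2, equality case: Let `(x*, y*)` be an interior Nash equilibrium
of the memoryless zero-sum game, and suppose the Nash equilibrium is unique. For
`y ∈ Δ^{m_Y−1}` with `dy = y − y*`, `(δᵀ U dy)² = 0` holds for every zero-sum vector
`δ ∈ ℝ^{m_X}` if and only if `y = y*`. -/
theorem stmt_7 (mX mY : ℕ) (U : Fin mX → Fin mY → ℝ)
    (xs : Fin mX → ℝ) (ys : Fin mY → ℝ)
    (hxspos : ∀ i, 0 < xs i) (hxssum : ∑ i : Fin mX, xs i = 1)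
    (hyspos : ∀ j, 0 < ys j) (hyssum : ∑ j : Fin mY, ys j = 1)
    -- (xs, ys) is a Nash equilibrium
    (hNashX : ∀ x : Fin mX → ℝ, (∀ i, 0 ≤ x i) → (∑ i : Fin mX, x i) = 1 →
      (∑ i : Fin mX, ∑ j : Fin mY, U i j * x i * ys j) ≤
        ∑ i : Fin mX, ∑ j : Fin mY, U i j * xs i * ys j)
    (hNashY : ∀ y : Fin mY → ℝ, (∀ j, 0 ≤ y j) → (∑ j : Fin mY, y j) = 1 →
      (∑ i : Fin mX, ∑ j : Fin mY, U i j * xs i * ys j) ≤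
        ∑ i : Fin mX, ∑ j : Fin mY, U i j * xs i * y j)
    -- the Nash equilibrium is unique
    (hUniq : ∀ (x' : Fin mX → ℝ) (y' : Fin mY → ℝ),
      (∀ i, 0 ≤ x' i) → (∑ i : Fin mX, x' i) = 1 →
      (∀ j, 0 ≤ y' j) → (∑ j : Fin mY, y' j) = 1 →
      (∀ x : Fin mX → ℝ, (∀ i, 0 ≤ x i) → (∑ i : Fin mX, x i) = 1 →
        (∑ i : Fin mX, ∑ j : Fin mY, U i j * x i * y' j) ≤
          ∑ i : Fin mX, ∑ j : Fin mY, U i j * x' i * y' j) →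
      (∀ y : Fin mY → ℝ, (∀ j, 0 ≤ y j) → (∑ j : Fin mY, y j) = 1 →
        (∑ i : Fin mX, ∑ j : Fin mY, U i j * x' i * y' j) ≤
          ∑ i : Fin mX, ∑ j : Fin mY, U i j * x' i * y j) →
      x' = xs ∧ y' = ys)
    (y : Fin mY → ℝ) (hy0 : ∀ j, 0 ≤ y j) (hy1 : ∑ j : Fin mY, y j = 1) :
    (∀ δ : Fin mX → ℝ, (∑ i : Fin mX, δ i) = 0 →
        (∑ i : Fin mX, ∑ j : Fin mY, δ i * U i j * (y j - ys j))^2 = 0)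
      ↔ y = ys := by
  constructor
  · intro h
    set v := ∑ i : Fin mX, ∑ j : Fin mY, U i j * xs i * ys j with hv
    -- pure strategy bounds for X
    have hp : ∀ i, (∑ j, U i j * ys j) ≤ v := by
      intro i
      have h1 := hNashX (fun l => if l = i then 1 else 0)
        (fun l => by positivity) (by simp)
      rw [dsum1] at h1
      simpa using h1
    -- columns are all equal to v
    have hqge : ∀ j, v ≤ ∑ i, U i j * xs i := by
      intro j
      have h1 := hNashY (fun l => if l = j then 1 else 0)
        (fun l => by positivity) (by simp)
      rw [dsum2] at h1
      simpa using h1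
    have hqsum : ∑ j, ys j * (∑ i, U i j * xs i) = v := (dsum2 U xs ys).symm
    have hq : ∀ j, ∑ i, U i j * xs i = v := by
      have hz : ∑ j, ys j * ((∑ i, U i j * xs i) - v) = 0 := by
        simp only [mul_sub, Finset.sum_sub_distrib, hqsum, ← Finset.sum_mul, hyssum]
        ring
      intro j
      have := (Finset.sum_eq_zero_iff_of_nonneg (fun j _ =>
        mul_nonneg (hyspos j).le (sub_nonneg.2 (hqge j)))).mp hz j (Finset.mem_univ j)
      have h2 : (∑ i, U i j * xs i) - v = 0 := by
        rcases mul_eq_zero.mp this with h3 | h3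
        · exact absurd h3 (hyspos j).ne'
        · exact h3
      linarith
    -- row differences all equal
    set r : Fin mX → ℝ := fun i => ∑ j, U i j * (y j - ys j) with hr
    have hreq : ∀ i k, r i = r k := by
      intro i k
      have hδ := h (fun l => (if l = i then 1 else 0) - (if l = k then 1 else 0))
        (by simp [Finset.sum_sub_distrib])
      have hexp : (∑ l : Fin mX, ∑ j : Fin mY,
          ((if l = i then (1:ℝ) else 0) - (if l = k then 1 else 0)) * U l j * (y j - ys j))
          = r i - r k := by
        have : ∀ l : Fin mX, ∑ j : Fin mY,
            ((if l = i then (1:ℝ) else 0) - (if l = k then 1 else 0)) * U l j * (y j - ys j)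
            = ((if l = i then (1:ℝ) else 0) - (if l = k then 1 else 0)) * r l := by
          intro l
          rw [Finset.mul_sum]
          exact Finset.sum_congr rfl fun j _ => by ring
        rw [Finset.sum_congr rfl fun l _ => this l]
        simp [sub_mul, Finset.sum_sub_distrib]
      rw [hexp] at hδ
      have := pow_eq_zero_iff (n := 2) (by norm_num) |>.mp hδ
      linarith
    -- ∑ xs i * r i = 0
    have hsr : ∑ i, xs i * r i = 0 := by
      have h1 : ∑ i, xs i * r i = ∑ j, (y j - ys j) * ∑ i, U i j * xs i := by
        rw [← dsum2 U xs (fun j => y j - ys j), dsum1 U xs (fun j => y j - ys j)]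
      rw [h1]
      have : ∀ j ∈ Finset.univ, (y j - ys j) * ∑ i, U i j * xs i = (y j - ys j) * v :=
        fun j _ => by rw [hq j]
      rw [Finset.sum_congr rfl this, ← Finset.sum_mul, Finset.sum_sub_distrib, hy1, hyssum]
      ring
    -- hence r i = 0 for all i
    have hr0 : ∀ i, r i = 0 := by
      intro i
      have h1 : ∑ l, xs l * r l = ∑ l, xs l * r i :=
        Finset.sum_congr rfl fun l _ => by rw [hreq l i]
      rw [hsr, ← Finset.sum_mul, hxssum, one_mul] at h1
      linarith
    -- rows against y equal rows against ys
    have hrow : ∀ i, ∑ j, U i j * y j = ∑ j, U i j * ys j := by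
      intro i
      have := hr0 i
      simp only [hr, mul_sub, Finset.sum_sub_distrib] at this
      linarith
    -- value against y
    have hvy : ∑ i : Fin mX, ∑ j : Fin mY, U i j * xs i * y j = v := by
      rw [dsum1]
      rw [Finset.sum_congr rfl fun i _ => by rw [hrow i]]
      rw [← dsum1]
    -- (xs, y) is a Nash equilibrium
    have HX : ∀ x : Fin mX → ℝ, (∀ i, 0 ≤ x i) → (∑ i : Fin mX, x i) = 1 →
        (∑ i : Fin mX, ∑ j : Fin mY, U i j * x i * y j) ≤
          ∑ i : Fin mX, ∑ j : Fin mY, U i j * xs i * y j := by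
      intro x hx0 hx1
      rw [hvy, dsum1]
      rw [Finset.sum_congr rfl fun i _ => by rw [hrow i]]
      calc ∑ i, x i * ∑ j, U i j * ys j ≤ ∑ i, x i * v :=
            Finset.sum_le_sum fun i _ => mul_le_mul_of_nonneg_left (hp i) (hx0 i)
        _ = v := by rw [← Finset.sum_mul, hx1, one_mul]
    have HY : ∀ y' : Fin mY → ℝ, (∀ j, 0 ≤ y' j) → (∑ j : Fin mY, y' j) = 1 →
        (∑ i : Fin mX, ∑ j : Fin mY, U i j * xs i * y j) ≤
          ∑ i : Fin mX, ∑ j : Fin mY, U i j * xs i * y' j := by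
      intro y' hy'0 hy'1
      rw [hvy, dsum2]
      rw [Finset.sum_congr rfl fun j _ => by rw [hq j]]
      rw [← Finset.sum_mul, hy'1, one_mul]
    exact (hUniq xs y (fun i => (hxspos i).le) hxssum hy0 hy1 HX HY).2
  · rintro rfl
    intro δ hδ
    simp
end

section
/- (Corollary 1: global convergence in matching pennies.) Let t ↦ (X(t), y(t)), defined for all t ≥ 0, be a differentiable solution of the replicator dynamics for the matching pennies game such that all entries of X(t) and y(t) remain in (0,1) for all t. Then y₁(t) → 1/2 as t → ∞, i.e. Y's strategy converges to the Nash equilibrium strategy y* = (1/2, 1/2), regardless of the initial strategies X(0), y(0). -/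
/-!
In the coordinates `p = y₀`, `u = x_{0|0}`, `v = x_{0|1}` the dynamics is a three-dimensional
system, and `Φ = -log p - log (1 - p) - 2 log u - 2 log (1 - v)` is a Lyapunov function for it:
`Φ' = -8 (p - 1/2)² (u + (1 - v)) ≤ 0`. Since `Φ ≥ 0`, the `-2 log u` term keeps `u` bounded
below by `δ = exp (-Φ(0)/2) > 0`, so `Φ' ≤ -8 δ (p - 1/2)²`. As `ṗ` is bounded, `p` is Lipschitz,
and a Barbalat-type argument forces `p - 1/2 → 0`: every time `|p - 1/2| ≥ ε`, it stays `≥ ε/2` on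
a window of fixed length, during which `Φ` drops by a fixed amount, which can happen only finitely
often since `Φ` is bounded below.
-/

open Filter Set Real Topology
open scoped NNReal

theorem Convex.sub_le_mul_sub_of_hasDerivAt_le {D : Set ℝ} (hD : Convex ℝ D) {f f' : ℝ → ℝ}
    {C : ℝ} (hf : ∀ x ∈ D, HasDerivAt f (f' x) x) (hf' : ∀ x ∈ D, f' x ≤ C)
    {x y : ℝ} (hx : x ∈ D) (hy : y ∈ D) (hxy : x ≤ y) : f y - f x ≤ C * (y - x) :=
  hD.image_sub_le_mul_sub_of_deriv_le (fun z hz => (hf z hz).continuousAt.continuousWithinAt)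
    (fun z hz => (hf z (interior_subset hz)).differentiableAt.differentiableWithinAt)
    (fun z hz => (hf z (interior_subset hz)).deriv ▸ hf' z (interior_subset hz)) x hx y hy hxy

theorem tendsto_zero_of_hasDerivAt_le_neg_mul_sq {Φ Φ' b : ℝ → ℝ} {c : ℝ} {K : ℝ≥0}
    (hc : 0 < c) (hΦ : ∀ t ∈ Ici (0 : ℝ), HasDerivAt Φ (Φ' t) t)
    (hΦ' : ∀ t ∈ Ici (0 : ℝ), Φ' t ≤ -(c * b t ^ 2)) (hbdd : BddBelow (Φ '' Ici 0))
    (hb : LipschitzOnWith K b (Ici 0)) : Tendsto b atTop (𝓝 0) := by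
  rw [Metric.tendsto_atTop]
  intro ε hε
  set L : ℝ := ε / (2 * (K + 1))
  have hL : 0 < L := by positivity
  set η : ℝ := c * (ε / 2) ^ 2 * L
  have drop : ∀ s ∈ Ici (0 : ℝ), ε ≤ |b s| → Φ (s + L) ≤ Φ s - η := by
    intro s hs hbs
    have hwindow : ∀ r ∈ Icc s (s + L), Φ' r ≤ -(c * (ε / 2) ^ 2) := by
      intro r hr
      have hr0 : r ∈ Ici (0 : ℝ) := mem_Ici.2 (le_trans hs hr.1)
      have hlip : |b r - b s| ≤ K * (r - s) := by
        simpa [Real.dist_eq, abs_of_nonneg (sub_nonneg.2 hr.1)] using hb.dist_le_mul r hr0 s hs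
      have hKL : (K : ℝ) * (r - s) ≤ ε / 2 := calc
        (K : ℝ) * (r - s) ≤ (K + 1) * L :=
          mul_le_mul (by linarith) (by linarith [hr.2]) (by linarith [hr.1]) (by positivity)
        _ = ε / 2 := by simp only [L]; field_simp
      have hbr : ε / 2 ≤ |b r| := by
        linarith [abs_sub_abs_le_abs_sub (b s) (b r), abs_sub_comm (b s) (b r)]
      have hsq : (ε / 2) ^ 2 ≤ b r ^ 2 := by
        simpa only [sq_abs] using pow_le_pow_left₀ (by positivity) hbr 2
      nlinarith [hΦ' r hr0]
    have := (convex_Icc s (s + L)).sub_le_mul_sub_of_hasDerivAt_le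
      (fun r hr => hΦ r (mem_Ici.2 (le_trans hs hr.1))) hwindow
      (left_mem_Icc.2 (by linarith)) (right_mem_Icc.2 (by linarith)) (by linarith)
    linarith [show -(c * (ε / 2) ^ 2) * (s + L - s) = -η by ring]
  have hη : 0 < η := by positivity
  obtain ⟨_, ⟨t₀, ht₀, rfl⟩, hlt⟩ := exists_lt_of_csInf_lt (nonempty_Ici.image Φ)
    (lt_add_of_pos_right (sInf (Φ '' Ici 0)) hη)
  refine ⟨t₀, fun s hs => ?_⟩
  have hs0 : s ∈ Ici (0 : ℝ) := mem_Ici.2 (le_trans ht₀ hs)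
  rw [Real.dist_eq, sub_zero]
  by_contra! hbs
  have hanti := (convex_Ici (0 : ℝ)).sub_le_mul_sub_of_hasDerivAt_le hΦ
    (fun t ht => (hΦ' t ht).trans (neg_nonpos.2 (by positivity))) ht₀ hs0 hs
  have hinf := csInf_le hbdd (mem_image_of_mem Φ (mem_Ici.2 (by linarith [mem_Ici.1 hs0]) :
    s + L ∈ Ici (0 : ℝ)))
  linarith [drop s hs0 hbs]

namespace MatchingPennies

/-! The replicator dynamics of matching pennies in the coordinates `p = y₀`, `u = x_{0|0}`,
`v = x_{0|1}`, after eliminating `y₁ = 1 - p` and `x_{1|j} = 1 - x_{0|j}`. -/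
def pDot (p u v : ℝ) : ℝ := -(2 * p * (1 - p) * (u + v - 1 + 2 * (2 * p - 1) * (u - v)))

def uDot (p u : ℝ) : ℝ := 2 * u * (1 - u) * p * (2 * p - 1)

def vDot (p v : ℝ) : ℝ := 2 * v * (1 - v) * (1 - p) * (2 * p - 1)

noncomputable def lyapunov (p u v : ℝ) : ℝ := -log p - log (1 - p) - 2 * log u - 2 * log (1 - v)

theorem lyapunov_nonneg {p u v : ℝ} (hp : p ∈ Ioo 0 1) (hu : u ∈ Ioo 0 1) (hv : v ∈ Ioo 0 1) :
    0 ≤ lyapunov p u v := by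
  have := log_nonpos hp.1.le hp.2.le
  have := log_nonpos (sub_nonneg.2 hp.2.le) (sub_le_self 1 hp.1.le)
  have := log_nonpos hu.1.le hu.2.le
  have := log_nonpos (sub_nonneg.2 hv.2.le) (sub_le_self 1 hv.1.le)
  unfold lyapunov
  linarith

theorem exp_neg_half_lyapunov_le {p u v : ℝ} (hp : p ∈ Ioo 0 1) (hu : u ∈ Ioo 0 1)
    (hv : v ∈ Ioo 0 1) : exp (-lyapunov p u v / 2) ≤ u := by
  have := log_nonpos hp.1.le hp.2.le
  have := log_nonpos (sub_nonneg.2 hp.2.le) (sub_le_self 1 hp.1.le)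
  have := log_nonpos (sub_nonneg.2 hv.2.le) (sub_le_self 1 hv.1.le)
  exact (exp_le_exp.2 (by unfold lyapunov; linarith)).trans_eq (exp_log hu.1)

theorem abs_pDot_le {p u v : ℝ} (hp : p ∈ Icc 0 1) (hu : u ∈ Icc 0 1) (hv : v ∈ Icc 0 1) :
    |pDot p u v| ≤ 3 / 2 := by
  have hpq : |2 * p * (1 - p)| ≤ 1 / 2 := by
    rw [abs_of_nonneg (by nlinarith [hp.1, hp.2])]
    nlinarith [sq_nonneg (2 * p - 1)]
  have hw : |u + v - 1 + 2 * (2 * p - 1) * (u - v)| ≤ 3 := by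
    have h1 : |u + v - 1| ≤ 1 := abs_le.2 ⟨by linarith [hu.1, hv.1], by linarith [hu.2, hv.2]⟩
    have h2 : |2 * p - 1| ≤ 1 := abs_le.2 ⟨by linarith [hp.1], by linarith [hp.2]⟩
    have h3 : |u - v| ≤ 1 := abs_le.2 ⟨by linarith [hu.1, hv.2], by linarith [hu.2, hv.1]⟩
    calc |u + v - 1 + 2 * (2 * p - 1) * (u - v)|
        ≤ |u + v - 1| + 2 * (|2 * p - 1| * |u - v|) := by
          grw [abs_add_le, abs_mul, abs_mul, abs_two, mul_assoc]
      _ ≤ 1 + 2 * (1 * 1) := by gcongr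
      _ = 3 := by norm_num
  rw [pDot, abs_neg, abs_mul]
  calc |2 * p * (1 - p)| * |u + v - 1 + 2 * (2 * p - 1) * (u - v)| ≤ 1 / 2 * 3 := by gcongr
    _ = 3 / 2 := by norm_num

theorem hasDerivAt_lyapunov {p u v : ℝ → ℝ} {t : ℝ} (hp01 : p t ∈ Ioo 0 1)
    (hu01 : u t ∈ Ioo 0 1) (hv01 : v t ∈ Ioo 0 1)
    (hp : HasDerivAt p (pDot (p t) (u t) (v t)) t) (hu : HasDerivAt u (uDot (p t) (u t)) t)
    (hv : HasDerivAt v (vDot (p t) (v t)) t) :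
    HasDerivAt (fun s => lyapunov (p s) (u s) (v s))
      (-(8 * (p t - 1 / 2) ^ 2 * (u t + (1 - v t)))) t := by
  have hp0 : p t ≠ 0 := hp01.1.ne'
  have hp1 : 1 - p t ≠ 0 := sub_ne_zero.2 hp01.2.ne'
  have hu0 : u t ≠ 0 := hu01.1.ne'
  have hv1 : 1 - v t ≠ 0 := sub_ne_zero.2 hv01.2.ne'
  have := (((hp.log hp0).neg.sub ((hp.const_sub 1).log hp1)).sub
    ((hu.log hu0).const_mul 2)).sub (((hv.const_sub 1).log hv1).const_mul 2)
  refine this.congr_deriv ?_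
  simp only [pDot, uDot, vDot]
  field_simp
  ring

theorem tendsto_one_half_of_hasDerivAt (p u v : ℝ → ℝ) (hp01 : ∀ t ≥ 0, p t ∈ Ioo 0 1)
    (hu01 : ∀ t ≥ 0, u t ∈ Ioo 0 1) (hv01 : ∀ t ≥ 0, v t ∈ Ioo 0 1)
    (hp : ∀ t ≥ 0, HasDerivAt p (pDot (p t) (u t) (v t)) t)
    (hu : ∀ t ≥ 0, HasDerivAt u (uDot (p t) (u t)) t)
    (hv : ∀ t ≥ 0, HasDerivAt v (vDot (p t) (v t)) t) :
    Tendsto p atTop (𝓝 (1 / 2)) := by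
  set Φ : ℝ → ℝ := fun t => lyapunov (p t) (u t) (v t)
  have hΦ : ∀ t ∈ Ici (0 : ℝ), HasDerivAt Φ (-(8 * (p t - 1 / 2) ^ 2 * (u t + (1 - v t)))) t :=
    fun t ht => hasDerivAt_lyapunov (hp01 t ht) (hu01 t ht) (hv01 t ht)
      (hp t ht) (hu t ht) (hv t ht)
  have hanti : ∀ t ≥ 0, Φ t ≤ Φ 0 := fun t ht => by
    have := (convex_Ici (0 : ℝ)).sub_le_mul_sub_of_hasDerivAt_le hΦ (C := 0)
      (fun s hs => by
        nlinarith [(hu01 s hs).1, (hv01 s hs).2, sq_nonneg (p s - 1 / 2)])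
      (mem_Ici.2 le_rfl) ht ht
    linarith
  set δ := exp (-Φ 0 / 2)
  have hδ : ∀ t ≥ 0, δ ≤ u t := fun t ht =>
    (exp_le_exp.2 (by linarith [hanti t ht])).trans
      (exp_neg_half_lyapunov_le (hp01 t ht) (hu01 t ht) (hv01 t ht))
  have hlip : LipschitzOnWith (3 / 2) (fun t => p t - 1 / 2) (Ici 0) := by
    refine (convex_Ici 0).lipschitzOnWith_of_nnnorm_hasDerivWithin_le
      (fun t ht => ((hp t ht).sub_const _).hasDerivWithinAt) fun t ht => ?_
    rw [← NNReal.coe_le_coe, coe_nnnorm, Real.norm_eq_abs]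
    exact abs_pDot_le (Ioo_subset_Icc_self (hp01 t ht)) (Ioo_subset_Icc_self (hu01 t ht))
      (Ioo_subset_Icc_self (hv01 t ht))
  have := tendsto_zero_of_hasDerivAt_le_neg_mul_sq (c := 8 * δ) (by positivity) hΦ
    (fun t ht => by
      nlinarith [mul_nonneg (sq_nonneg (p t - 1 / 2))
        (by linarith [hδ t ht, (hv01 t ht).2] : 0 ≤ u t - δ + (1 - v t))])
    ⟨0, forall_mem_image.2 fun t ht => lyapunov_nonneg (hp01 t ht) (hu01 t ht) (hv01 t ht)⟩ hlip
  have h := this.add_const (1 / 2)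
  rw [zero_add] at h
  exact h.congr fun t => sub_add_cancel (p t) (1 / 2)

end MatchingPennies

/-- Corollary 1: global convergence in matching pennies: For any
differentiable solution `t ↦ (X(t), y(t))`, `t ≥ 0`, of the replicator dynamics for the
matching pennies game whose entries remain in `(0,1)` (columns of `X` and `y` in the
simplex), Y's strategy converges to the Nash equilibrium strategy `y* = (1/2, 1/2)`
as `t → ∞`, regardless of the initial strategies. -/
theorem stmt_12 (U : Fin 2 → Fin 2 → ℝ) (hU : U = ![![1, -1], ![-1, 1]])
    (X : ℝ → Fin 2 → Fin 2 → ℝ) (Y : ℝ → Fin 2 → ℝ)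
    (hXin : ∀ t ≥ (0 : ℝ), ∀ i j, X t i j ∈ Set.Ioo (0 : ℝ) 1)
    (hYin : ∀ t ≥ (0 : ℝ), ∀ j, Y t j ∈ Set.Ioo (0 : ℝ) 1)
    (hXsum : ∀ t ≥ (0 : ℝ), ∀ j, ∑ i : Fin 2, X t i j = 1)
    (hYsum : ∀ t ≥ (0 : ℝ), ∑ j : Fin 2, Y t j = 1)
    -- replicator dynamics of X : ẋ_{i|j} = x_{i|j}(g_{ij} − Σ_{i'} x_{i'|j} g_{i'j}),
    -- g_{ij} = y_j Σ_{j'} u_{ij'} y_{j'}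
    (hX : ∀ t ≥ (0 : ℝ), ∀ i j, HasDerivAt (fun s => X s i j)
      (X t i j * ((Y t j * ∑ j' : Fin 2, U i j' * Y t j') -
        ∑ i' : Fin 2, X t i' j * (Y t j * ∑ j' : Fin 2, U i' j' * Y t j'))) t)
    -- replicator dynamics of Y : ẏ_j = −y_j(h_j − Σ_{j'} y_{j'} h_{j'}),
    -- h_j = Σ_i u_{ij} x_i^st + Σ_i x_{i|j} Σ_{j'} u_{ij'} y_{j'}
    (hY : ∀ t ≥ (0 : ℝ), ∀ j, HasDerivAt (fun s => Y s j)
      (-(Y t j * (((∑ i : Fin 2, U i j * (∑ j' : Fin 2, X t i j' * Y t j')) +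
          ∑ i : Fin 2, X t i j * ∑ j' : Fin 2, U i j' * Y t j') -
        ∑ j₂ : Fin 2, Y t j₂ *
          ((∑ i : Fin 2, U i j₂ * (∑ j' : Fin 2, X t i j' * Y t j')) +
            ∑ i : Fin 2, X t i j₂ * ∑ j' : Fin 2, U i j' * Y t j')))) t) :
    Filter.Tendsto Y Filter.atTop (nhds ![1/2, 1/2]) := by
  subst hU
  have hY1 : ∀ t ≥ (0 : ℝ), Y t 1 = 1 - Y t 0 := fun t ht => by
    linarith [Fin.sum_univ_two (Y t) ▸ hYsum t ht]
  have hX1 : ∀ t ≥ (0 : ℝ), ∀ j, X t 1 j = 1 - X t 0 j := fun t ht j => by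
    linarith [Fin.sum_univ_two (X t · j) ▸ hXsum t ht j]
  have hY0 := MatchingPennies.tendsto_one_half_of_hasDerivAt
    (fun t => Y t 0) (fun t => X t 0 0) (fun t => X t 0 1)
    (fun t ht => hYin t ht 0) (fun t ht => hXin t ht 0 0) (fun t ht => hXin t ht 0 1)
    (fun t ht => (hY t ht 0).congr_deriv (by
      simp only [Fin.sum_univ_two, Matrix.cons_val', Matrix.cons_val_zero, Matrix.cons_val_one,
        Matrix.cons_val_fin_one, hY1 t ht, hX1 t ht, MatchingPennies.pDot]
      ring))
    (fun t ht => (hX t ht 0 0).congr_deriv (by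
      simp only [Fin.sum_univ_two, Matrix.cons_val', Matrix.cons_val_zero, Matrix.cons_val_one,
        Matrix.cons_val_fin_one, hY1 t ht, hX1 t ht, MatchingPennies.uDot]
      ring))
    (fun t ht => (hX t ht 0 1).congr_deriv (by
      simp only [Fin.sum_univ_two, Matrix.cons_val', Matrix.cons_val_zero, Matrix.cons_val_one,
        Matrix.cons_val_fin_one, hY1 t ht, hX1 t ht, MatchingPennies.vDot]
      ring))
  have hY1' : Tendsto (fun t => Y t 1) atTop (𝓝 (1 / 2)) := by
    have h := (tendsto_const_nhds (x := (1 : ℝ))).sub hY0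
    rw [show (1 : ℝ) - 1 / 2 = 1 / 2 by norm_num] at h
    exact h.congr' ((eventually_ge_atTop 0).mono fun t ht => (hY1 t ht).symm)
  refine tendsto_pi_nhds.2 fun j => ?_
  fin_cases j
  · simpa using hY0
  · simpa using hY1'
end

section
/- (Equivalence to ordinary positive definiteness.) Let M = (m_{kk'}) be an m×m real matrix, fix an index k̂ ∈ {1,…,m}, and define the (m−1)×(m−1) matrix M̃ = (m̃_{kk'})_{k,k' ≠ k̂} by m̃_{kk'} = m_{kk'} − m_{k k̂} − m_{k̂ k'} + m_{k̂ k̂}. Then M is positive definite for zero-sum vectors if and only if M̃ is positive definite in the ordinary sense (δ̃ᵀ M̃ δ̃ > 0 for every nonzero δ̃ ∈ ℝ^{m−1}). -/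
private lemma sub_sum_eq {m : ℕ} (khat : Fin m) (g : Fin m → ℝ) :
    ∑ k : {k : Fin m // k ≠ khat}, g k.1 = ∑ k ∈ Finset.univ.erase khat, g k :=
  (Finset.sum_subtype _ (fun x => by simp [Finset.mem_erase]) g).symm

private lemma key {m : ℕ} (M : Fin m → Fin m → ℝ) (khat : Fin m) (δ : Fin m → ℝ)
    (hsum : (∑ k : Fin m, δ k) = 0) :
    ∑ k : Fin m, ∑ k' : Fin m, δ k * M k k' * δ k'
      = ∑ k : {k : Fin m // k ≠ khat}, ∑ k' : {k : Fin m // k ≠ khat},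
          δ k.1 * (M k.1 k'.1 - M k.1 khat - M khat k'.1 + M khat khat) * δ k'.1 := by
  set Mt : Fin m → Fin m → ℝ :=
    fun k k' => M k k' - M k khat - M khat k' + M khat khat with hMt
  have c1 : ∑ k : Fin m, ∑ k' : Fin m, δ k * M k khat * δ k' = 0 := by
    simp [← Finset.mul_sum, hsum]
  have c2 : ∑ k : Fin m, ∑ k' : Fin m, δ k * M khat k' * δ k' = 0 := by
    rw [Finset.sum_comm]
    have h0 : ∀ k' : Fin m, ∑ k : Fin m, δ k * M khat k' * δ k' = 0 := by
      intro k'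
      have : ∑ k : Fin m, δ k * M khat k' * δ k'
          = (∑ k : Fin m, δ k) * (M khat k' * δ k') := by
        rw [Finset.sum_mul]; exact Finset.sum_congr rfl (fun k _ => by ring)
      rw [this, hsum, zero_mul]
    simp [h0]
  have c3 : ∑ k : Fin m, ∑ k' : Fin m, δ k * M khat khat * δ k' = 0 := by
    simp [← Finset.mul_sum, hsum]
  have h1 : ∑ k : Fin m, ∑ k' : Fin m, δ k * M k k' * δ k'
      = ∑ k : Fin m, ∑ k' : Fin m, δ k * Mt k k' * δ k' := by
    have expand : ∑ k : Fin m, ∑ k' : Fin m, δ k * Mt k k' * δ k'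
        = ∑ k : Fin m, ∑ k' : Fin m, (δ k * M k k' * δ k' - δ k * M k khat * δ k'
            - δ k * M khat k' * δ k' + δ k * M khat khat * δ k') := by
      refine Finset.sum_congr rfl (fun k _ => Finset.sum_congr rfl (fun k' _ => ?_))
      simp only [hMt]; ring
    rw [expand]
    simp only [Finset.sum_sub_distrib, Finset.sum_add_distrib]
    rw [c1, c2, c3]
    ring
  have hrow : ∀ k' : Fin m, Mt khat k' = 0 := by intro k'; simp only [hMt]; ring
  have hcol : ∀ k : Fin m, Mt k khat = 0 := by intro k; simp only [hMt]; ring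
  have h2a : ∀ k : Fin m, ∑ k' ∈ Finset.univ.erase khat, δ k * Mt k k' * δ k'
      = ∑ k' : Fin m, δ k * Mt k k' * δ k' := by
    intro k
    apply Finset.sum_subset (Finset.erase_subset _ _)
    intro k' _ hk'
    have hk'e : k' = khat := by simpa [Finset.mem_erase] using hk'
    rw [hk'e, hcol, mul_zero, zero_mul]
  have h2 : ∑ k ∈ Finset.univ.erase khat, ∑ k' ∈ Finset.univ.erase khat,
      δ k * Mt k k' * δ k' = ∑ k : Fin m, ∑ k' : Fin m, δ k * Mt k k' * δ k' := by
    rw [Finset.sum_congr rfl (fun k _ => h2a k)]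
    apply Finset.sum_subset (Finset.erase_subset _ _)
    intro k _ hk
    have hke : k = khat := by simpa [Finset.mem_erase] using hk
    subst hke
    simp [hrow]
  rw [h1, ← h2, ← sub_sum_eq khat]
  refine Finset.sum_congr rfl (fun k _ => ?_)
  rw [← sub_sum_eq khat]

/-- Equivalence to ordinary positive definiteness: An m×m matrix `M` is
positive definite for zero-sum vectors if and only if the reduced (m−1)×(m−1) matrix
`m̃_{kk'} = m_{kk'} − m_{k k̂} − m_{k̂ k'} + m_{k̂ k̂}` (indices `k, k' ≠ k̂`) is positive
definite in the ordinary sense. -/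
theorem stmt_14 (m : ℕ) (M : Fin m → Fin m → ℝ) (khat : Fin m) :
    (∀ δ : Fin m → ℝ, δ ≠ 0 → (∑ k : Fin m, δ k) = 0 →
        0 < ∑ k : Fin m, ∑ k' : Fin m, δ k * M k k' * δ k')
      ↔ (∀ dt : {k : Fin m // k ≠ khat} → ℝ, dt ≠ 0 →
          0 < ∑ k : {k : Fin m // k ≠ khat}, ∑ k' : {k : Fin m // k ≠ khat},
            dt k * (M k.1 k'.1 - M k.1 khat - M khat k'.1 + M khat khat) * dt k') := by
  constructor
  · intro h dt hdt
    set T : ℝ := ∑ j : {k : Fin m // k ≠ khat}, dt j with hT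
    set δ : Fin m → ℝ := fun k => if hk : k = khat then -T else dt ⟨k, hk⟩ with hδ
    have hrestr : ∀ k : {k : Fin m // k ≠ khat}, δ k.1 = dt k := by
      rintro ⟨k, hk⟩; simp [hδ, hk]
    have hδne : δ ≠ 0 := by
      obtain ⟨k, hk⟩ : ∃ k, dt k ≠ 0 := by
        by_contra hc; push_neg at hc; exact hdt (funext hc)
      intro hzero
      apply hk
      rw [← hrestr k, hzero, Pi.zero_apply]
    have hδsum : (∑ k : Fin m, δ k) = 0 := by
      rw [← Finset.add_sum_erase _ δ (Finset.mem_univ khat), ← sub_sum_eq khat δ]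
      have h1 : δ khat = -T := by simp [hδ]
      have h2 : ∑ k : {k : Fin m // k ≠ khat}, δ k.1 = T := by
        rw [hT]; exact Finset.sum_congr rfl (fun k _ => hrestr k)
      rw [h1, h2]; ring
    have hpos := h δ hδne hδsum
    rw [key M khat δ hδsum] at hpos
    have heq : ∑ k : {k : Fin m // k ≠ khat}, ∑ k' : {k : Fin m // k ≠ khat},
        δ k.1 * (M k.1 k'.1 - M k.1 khat - M khat k'.1 + M khat khat) * δ k'.1
        = ∑ k : {k : Fin m // k ≠ khat}, ∑ k' : {k : Fin m // k ≠ khat},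
        dt k * (M k.1 k'.1 - M k.1 khat - M khat k'.1 + M khat khat) * dt k' := by
      refine Finset.sum_congr rfl (fun k _ => Finset.sum_congr rfl (fun k' _ => ?_))
      rw [hrestr k, hrestr k']
    rwa [heq] at hpos
  · intro h δ hδ hsum
    set dt : {k : Fin m // k ≠ khat} → ℝ := fun k => δ k.1 with hdt
    have hdtne : dt ≠ 0 := by
      intro hzero
      apply hδ
      funext k
      by_cases hk : k = khat
      · subst hk
        have hsplit : (∑ j : Fin m, δ j) = δ k + ∑ j : {j : Fin m // j ≠ k}, δ j.1 := by
          rw [sub_sum_eq k δ, Finset.add_sum_erase _ δ (Finset.mem_univ k)]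
        rw [hsum] at hsplit
        have hz : ∑ j : {j : Fin m // j ≠ k}, δ j.1 = 0 := by
          refine Finset.sum_eq_zero (fun j _ => ?_)
          have := congrFun hzero j
          simpa [hdt] using this
        rw [hz, add_zero] at hsplit
        simpa using hsplit.symm
      · have := congrFun hzero ⟨k, hk⟩
        simpa [hdt] using this
    have hpos := h dt hdtne
    rw [key M khat δ hsum]
    exact hpos
end

section
/- Let t ↦ (X(t), y(t)) be a differentiable trajectory of the gradient descent-ascent dynamics, and let (x*, y*) be an interior Nash equilibrium with value u*. Define D₂(X, y) = Σ_j (1/2)‖x_j − x*‖² + (1/2)‖y − y*‖². Then at every time t, d/dt D₂(X(t), y(t)) = −dyᵀ X(t)ᵀ U dy, where dy = y(t) − y*. -/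
/-!
Differentiating `D₂` gives `Σⱼ (xⱼ − x*)·ẋⱼ + (y − y*)·ẏ`. The mean-subtraction terms of the
dynamics drop out because each `xⱼ − x*` and `y − y*` sums to zero. Of what is left, the
`X`-part and the first half of `−(y − y*)·h` both equal `(x^st)ᵀ U y − u*` (zero-sum structure
plus the equalizing property of `(x*, y*)`), so they cancel. The remaining `−(y − y*)ᵀ Xᵀ U y`
equals `−(y − y*)ᵀ Xᵀ U (y − y*)` since `U y* = u* 𝟙` and the columns of `X` sum to one.
-/

open Finset

section
variable {ι κ : Type*} [Fintype ι] [Fintype κ]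

theorem sum_sub_mul_sub_const_of_sum_eq {a b : ι → ℝ} (g : ι → ℝ) (c : ℝ)
    (h : ∑ i, a i = ∑ i, b i) :
    ∑ i, (a i - b i) * (g i - c) = ∑ i, (a i - b i) * g i := by
  simp only [mul_sub, sum_sub_distrib, ← sum_mul, h, sub_self, zero_mul, sub_zero]

theorem hasDerivAt_half_sum_sq_sub {f : ℝ → ι → ℝ} {f' : ι → ℝ} {t : ℝ} (c : ι → ℝ)
    (hf : ∀ i, HasDerivAt (fun s => f s i) (f' i) t) :
    HasDerivAt (fun s => (1 / 2 : ℝ) * ∑ i, (f s i - c i) ^ 2)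
      (∑ i, (f t i - c i) * f' i) t := by
  refine ((HasDerivAt.fun_sum fun i _ => ((hf i).sub_const (c i)).fun_pow 2).const_mul
    (1 / 2 : ℝ)).congr_deriv ?_
  rw [mul_sum]
  refine sum_congr rfl fun i _ => ?_
  push_cast
  ring

theorem sum_mul_sum_mul_comm_s16 (a : ι → ℝ) (V : ι → κ → ℝ) (b : κ → ℝ) :
    ∑ i, a i * ∑ k, V i k * b k = ∑ k, (∑ i, a i * V i k) * b k :=
  Matrix.dotProduct_mulVec a V b

theorem sum_mul_sum_mul_eq_of_equalizing {V : ι → κ → ℝ} {a : ι → ℝ} {b : κ → ℝ} {u : ℝ}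
    (ha : ∀ k, ∑ i, V i k * a i = u) (hb : ∑ k, b k = 1) :
    ∑ i, a i * ∑ k, V i k * b k = u := by
  rw [sum_mul_sum_mul_comm_s16]
  simp only [mul_comm (a _) (V _ _), ha, ← mul_sum, hb, mul_one]

variable (U : ι → κ → ℝ) {xs : ι → ℝ} {ys : κ → ℝ} {u : ℝ}

theorem cross_terms_cancel (hNx : ∀ j, ∑ i, U i j * xs i = u) (hNy : ∀ i, ∑ j, U i j * ys j = u)
    {x : ι → κ → ℝ} {y : κ → ℝ} (hx : ∀ j, ∑ i, x i j = 1) (hy : ∑ j, y j = 1) :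
    ∑ j, ∑ i, (x i j - xs i) * (y j * ∑ j', U i j' * y j') =
      ∑ j, (y j - ys j) * ∑ i, U i j * ∑ j', x i j' * y j' := by
  have hst : ∑ i, ∑ j', x i j' * y j' = 1 := by
    rw [sum_comm]; simp only [← sum_mul, hx, one_mul, hy]
  have hxs : ∑ j, ∑ i, xs i * (y j * ∑ j', U i j' * y j') = u := by
    calc _ = ∑ j, y j * ∑ i, xs i * ∑ j', U i j' * y j' :=
          sum_congr rfl fun j _ => by rw [mul_sum]; exact sum_congr rfl fun _ _ => by ring
      _ = u := by rw [sum_mul_sum_mul_eq_of_equalizing hNx hy, ← sum_mul, hy, one_mul]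
  have hys := sum_mul_sum_mul_eq_of_equalizing (V := fun j i => U i j) hNy hst
  have hx_st : ∑ j, ∑ i, x i j * (y j * ∑ j', U i j' * y j') =
      ∑ i, (∑ j, x i j * y j) * ∑ j', U i j' * y j' := by
    rw [sum_comm]
    simp_rw [sum_mul, mul_assoc]
  have hy_st : ∑ j, y j * ∑ i, U i j * ∑ j', x i j' * y j' =
      ∑ i, (∑ j, x i j * y j) * ∑ j', U i j' * y j' := by
    rw [sum_mul_sum_mul_comm_s16]
    exact sum_congr rfl fun i _ => by simp only [mul_comm (y _)]; ring
  simp only [sub_mul, sum_sub_distrib, hx_st, hxs, hy_st, hys]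

theorem sum_sum_mul_mul_sub_eq (hNy : ∀ i, ∑ j, U i j * ys j = u)
    {x : ι → κ → ℝ} {y : κ → ℝ} (hx : ∀ j, ∑ i, x i j = 1) (hy : ∑ j, y j = ∑ j, ys j) :
    ∑ j, ∑ j', (y j - ys j) * (∑ i, x i j * U i j') * (y j' - ys j') =
      ∑ j, (y j - ys j) * ∑ i, x i j * ∑ j', U i j' * y j' := by
  have inner : ∀ j, ∑ j', (∑ i, x i j * U i j') * (y j' - ys j') =
      (∑ i, x i j * ∑ j', U i j' * y j') - u := by
    intro j
    rw [← sum_mul_sum_mul_comm_s16]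
    simp only [mul_sub, sum_sub_distrib, hNy, ← sum_mul, hx, one_mul]
  calc _ = ∑ j, (y j - ys j) * ((∑ i, x i j * ∑ j', U i j' * y j') - u) := by
        refine sum_congr rfl fun j _ => ?_
        rw [← inner j, mul_sum]
        exact sum_congr rfl fun _ _ => mul_assoc _ _ _
    _ = _ := sum_sub_mul_sub_const_of_sum_eq _ u hy

end

theorem stmt_16_general (mX mY : ℕ) (U : Fin mX → Fin mY → ℝ)
    (X : ℝ → Fin mX → Fin mY → ℝ) (Y : ℝ → Fin mY → ℝ)
    (hXsum : ∀ t j, ∑ i : Fin mX, X t i j = 1) (hYsum : ∀ t, ∑ j : Fin mY, Y t j = 1)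
    -- gradient descent-ascent dynamics of X : ẋ_{i|j} = g_{ij} − (1/m_X) Σ_{i'} g_{i'j},
    -- g_{ij} = y_j Σ_{j'} u_{ij'} y_{j'}
    (hX : ∀ t i j, HasDerivAt (fun s => X s i j)
      ((Y t j * ∑ j' : Fin mY, U i j' * Y t j') -
        (1 / (mX : ℝ)) * ∑ i' : Fin mX, Y t j * ∑ j' : Fin mY, U i' j' * Y t j') t)
    -- gradient descent-ascent dynamics of Y : ẏ_j = −(h_j − (1/m_Y) Σ_{j'} h_{j'}),
    -- h_j = Σ_i u_{ij} x_i^st + Σ_i x_{i|j} Σ_{j'} u_{ij'} y_{j'}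
    (hY : ∀ t j, HasDerivAt (fun s => Y s j)
      (-(((∑ i : Fin mX, U i j * (∑ j' : Fin mY, X t i j' * Y t j')) +
          ∑ i : Fin mX, X t i j * ∑ j' : Fin mY, U i j' * Y t j') -
        (1 / (mY : ℝ)) * ∑ j₂ : Fin mY,
          ((∑ i : Fin mX, U i j₂ * (∑ j' : Fin mY, X t i j' * Y t j')) +
            ∑ i : Fin mX, X t i j₂ * ∑ j' : Fin mY, U i j' * Y t j'))) t)
    -- interior Nash equilibrium (x*, y*) with value u*
    (xs : Fin mX → ℝ) (ys : Fin mY → ℝ) (ustar : ℝ)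
    (hxssum : ∑ i : Fin mX, xs i = 1)
    (hyssum : ∑ j : Fin mY, ys j = 1)
    (hNx : ∀ j, ∑ i : Fin mX, U i j * xs i = ustar)
    (hNy : ∀ i, ∑ j : Fin mY, U i j * ys j = ustar)
    (t : ℝ) :
    HasDerivAt
      (fun s => (∑ j : Fin mY, (1/2 : ℝ) * ∑ i : Fin mX, (X s i j - xs i)^2) +
        (1/2 : ℝ) * ∑ j : Fin mY, (Y s j - ys j)^2)
      (-(∑ j : Fin mY, ∑ j' : Fin mY,
        (Y t j - ys j) * (∑ i : Fin mX, X t i j * U i j') * (Y t j' - ys j'))) t := by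
  refine ((HasDerivAt.fun_sum fun j _ => hasDerivAt_half_sum_sq_sub xs fun i => hX t i j).add
    (hasDerivAt_half_sum_sq_sub ys (hY t))).congr_deriv ?_
  have hx_sum (j) : ∑ i, X t i j = ∑ i, xs i := by rw [hXsum, hxssum]
  have hy_sum : ∑ j, Y t j = ∑ j, ys j := by rw [hYsum, hyssum]
  simp only [mul_neg, sum_neg_distrib, sum_sub_mul_sub_const_of_sum_eq _ _ (hx_sum _),
    sum_sub_mul_sub_const_of_sum_eq _ _ hy_sum]
  rw [cross_terms_cancel U hNx hNy (hXsum t) (hYsum t),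
    sum_sum_mul_mul_sub_eq U hNy (hXsum t) hy_sum]
  simp only [mul_add, sum_add_distrib]
  ring

/-- Along a differentiable trajectory of the gradient descent-ascent
dynamics with an interior Nash equilibrium `(x*, y*)` of value `u*`, the time derivative of
`D₂(X, y) = Σ_j (1/2)‖x_j − x*‖² + (1/2)‖y − y*‖²` equals `−dyᵀ Xᵀ U dy`, where
`dy = y(t) − y*`. -/
theorem stmt_16 (mX mY : ℕ) (U : Fin mX → Fin mY → ℝ)
    (X : ℝ → Fin mX → Fin mY → ℝ) (Y : ℝ → Fin mY → ℝ)
    (hXpos : ∀ t i j, 0 < X t i j) (hYpos : ∀ t j, 0 < Y t j)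
    (hXsum : ∀ t j, ∑ i : Fin mX, X t i j = 1) (hYsum : ∀ t, ∑ j : Fin mY, Y t j = 1)
    -- gradient descent-ascent dynamics of X : ẋ_{i|j} = g_{ij} − (1/m_X) Σ_{i'} g_{i'j},
    -- g_{ij} = y_j Σ_{j'} u_{ij'} y_{j'}
    (hX : ∀ t i j, HasDerivAt (fun s => X s i j)
      ((Y t j * ∑ j' : Fin mY, U i j' * Y t j') -
        (1 / (mX : ℝ)) * ∑ i' : Fin mX, Y t j * ∑ j' : Fin mY, U i' j' * Y t j') t)
    -- gradient descent-ascent dynamics of Y : ẏ_j = −(h_j − (1/m_Y) Σ_{j'} h_{j'}),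
    -- h_j = Σ_i u_{ij} x_i^st + Σ_i x_{i|j} Σ_{j'} u_{ij'} y_{j'}
    (hY : ∀ t j, HasDerivAt (fun s => Y s j)
      (-(((∑ i : Fin mX, U i j * (∑ j' : Fin mY, X t i j' * Y t j')) +
          ∑ i : Fin mX, X t i j * ∑ j' : Fin mY, U i j' * Y t j') -
        (1 / (mY : ℝ)) * ∑ j₂ : Fin mY,
          ((∑ i : Fin mX, U i j₂ * (∑ j' : Fin mY, X t i j' * Y t j')) +
            ∑ i : Fin mX, X t i j₂ * ∑ j' : Fin mY, U i j' * Y t j'))) t)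
    -- interior Nash equilibrium (x*, y*) with value u*
    (xs : Fin mX → ℝ) (ys : Fin mY → ℝ) (ustar : ℝ)
    (hxspos : ∀ i, 0 < xs i) (hxssum : ∑ i : Fin mX, xs i = 1)
    (hyspos : ∀ j, 0 < ys j) (hyssum : ∑ j : Fin mY, ys j = 1)
    (hNx : ∀ j, ∑ i : Fin mX, U i j * xs i = ustar)
    (hNy : ∀ i, ∑ j : Fin mY, U i j * ys j = ustar)
    (t : ℝ) :
    HasDerivAt
      (fun s => (∑ j : Fin mY, (1/2 : ℝ) * ∑ i : Fin mX, (X s i j - xs i)^2) +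
        (1/2 : ℝ) * ∑ j : Fin mY, (Y s j - ys j)^2)
      (-(∑ j : Fin mY, ∑ j' : Fin mY,
        (Y t j - ys j) * (∑ i : Fin mX, X t i j * U i j') * (Y t j' - ys j'))) t :=
  stmt_16_general mX mY U X Y hXsum hYsum hX hY xs ys ustar hxssum hyssum hNx hNy t
end

section
/- Let t ↦ (X(t), y(t)) be a differentiable trajectory of the gradient descent-ascent dynamics, and let (x*, y*) be an interior Nash equilibrium with value u*. Define H₂(X; δ) = δᵀ U Xᵀ δ for a zero-sum vector δ ∈ ℝ^{m_X}. Then at every time t and for every zero-sum δ, d/dt H₂(X(t); δ) = (δᵀ U dy)², where dy = y(t) − y*; in particular d/dt H₂(X(t); δ) ≥ 0. -/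
/-!
Differentiating `H₂(X; δ) = ∑ δᵢ Uᵢⱼ Xᵢ'ⱼ δᵢ'` replaces `X` by `Ẋ`, and
`Ẋᵢ'ⱼ = yⱼ (U y)ᵢ' - cⱼ` where the correction `cⱼ` does not depend on `i'`, so it is killed by
`∑ δᵢ' = 0`. What remains is `(δᵀ U y) · (δᵀ U y)`. Finally `δᵀ U y* = u* ∑ δᵢ = 0`, since all
entries of `U y*` equal `u*`, so `δᵀ U y = δᵀ U (y - y*)`.
-/

open Finset

variable {ι κ : Type*} [Fintype ι] [Fintype κ]

theorem hasDerivAt_sum_mul_mul_mul (a b : ι → ℝ) (U : ι → κ → ℝ) {X : ℝ → ι → κ → ℝ}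
    {X' : ι → κ → ℝ} {t : ℝ} (hX : ∀ i j, HasDerivAt (fun s => X s i j) (X' i j) t) :
    HasDerivAt (fun s => ∑ i, ∑ i', ∑ j, a i * U i j * X s i' j * b i')
      (∑ i, ∑ i', ∑ j, a i * U i j * X' i' j * b i') t :=
  HasDerivAt.fun_sum fun i _ => HasDerivAt.fun_sum fun i' _ => HasDerivAt.fun_sum fun j _ =>
    ((hX i' j).const_mul (a i * U i j)).mul_const (b i')

theorem sum_mul_sub_const_mul_eq_of_sum_eq_zero {δ : ι → ℝ} (hδ : ∑ i, δ i = 0)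
    (U : ι → κ → ℝ) (y : κ → ℝ) (w : ι → ℝ) (c : κ → ℝ) :
    ∑ i, ∑ i', ∑ j, δ i * U i j * (y j * w i' - c j) * δ i' =
      (∑ i, ∑ j, δ i * U i j * y j) * ∑ i', w i' * δ i' := by
  have hinner : ∀ j, ∑ i', (y j * w i' - c j) * δ i' = y j * ∑ i', w i' * δ i' := fun j => by
    simp only [sub_mul, sum_sub_distrib, ← mul_sum, hδ, mul_zero, sub_zero, mul_assoc]
  simp only [sum_mul]
  refine sum_congr rfl fun i _ => ?_
  rw [sum_comm]
  refine sum_congr rfl fun j _ => ?_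
  simp only [mul_assoc, ← mul_sum, hinner]

theorem sum_sum_mul_eq_zero_of_mulVec_const {δ : ι → ℝ} (hδ : ∑ i, δ i = 0)
    {U : ι → κ → ℝ} {y : κ → ℝ} {u : ℝ} (hUy : ∀ i, ∑ j, U i j * y j = u) :
    ∑ i, ∑ j, δ i * U i j * y j = 0 := by
  simp only [mul_assoc, ← mul_sum, hUy, ← sum_mul, hδ, zero_mul]

theorem stmt_17_general (mX mY : ℕ) (U : Fin mX → Fin mY → ℝ)
    (X : ℝ → Fin mX → Fin mY → ℝ) (Y : ℝ → Fin mY → ℝ)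
    -- gradient descent-ascent dynamics of X
    (hX : ∀ t i j, HasDerivAt (fun s => X s i j)
      ((Y t j * ∑ j' : Fin mY, U i j' * Y t j') -
        (1 / (mX : ℝ)) * ∑ i' : Fin mX, Y t j * ∑ j' : Fin mY, U i' j' * Y t j') t)
    -- interior Nash equilibrium (x*, y*) with value u*
    (ys : Fin mY → ℝ) (ustar : ℝ)
    (hNy : ∀ i, ∑ j : Fin mY, U i j * ys j = ustar)
    (t : ℝ) (δ : Fin mX → ℝ) (hδ : ∑ i : Fin mX, δ i = 0) :
    HasDerivAt
      (fun s => ∑ i : Fin mX, ∑ i' : Fin mX, ∑ j : Fin mY,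
        δ i * U i j * X s i' j * δ i')
      ((∑ i : Fin mX, ∑ j : Fin mY, δ i * U i j * (Y t j - ys j))^2) t ∧
    0 ≤ (∑ i : Fin mX, ∑ j : Fin mY, δ i * U i j * (Y t j - ys j))^2 := by
  refine ⟨?_, sq_nonneg _⟩
  have hderiv := hasDerivAt_sum_mul_mul_mul δ δ U (hX t)
  rw [sum_mul_sub_const_mul_eq_of_sum_eq_zero hδ] at hderiv
  convert hderiv using 1
  have hys := sum_sum_mul_eq_zero_of_mulVec_const hδ hNy
  simp only [mul_sub, sum_sub_distrib, hys, sub_zero, sq]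
  congr 1
  simp only [sum_mul]
  exact sum_congr rfl fun i _ => sum_congr rfl fun j _ => by ring

/-- Along a differentiable trajectory of the gradient descent-ascent
dynamics with an interior Nash equilibrium `(x*, y*)` of value `u*`, for every zero-sum
vector `δ ∈ ℝ^{m_X}`, the time derivative of `H₂(X; δ) = δᵀ U Xᵀ δ` equals `(δᵀ U dy)²`,
where `dy = y(t) − y*`; in particular it is nonnegative. -/
theorem stmt_17 (mX mY : ℕ) (U : Fin mX → Fin mY → ℝ)
    (X : ℝ → Fin mX → Fin mY → ℝ) (Y : ℝ → Fin mY → ℝ)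
    (hXpos : ∀ t i j, 0 < X t i j) (hYpos : ∀ t j, 0 < Y t j)
    (hXsum : ∀ t j, ∑ i : Fin mX, X t i j = 1) (hYsum : ∀ t, ∑ j : Fin mY, Y t j = 1)
    -- gradient descent-ascent dynamics of X
    (hX : ∀ t i j, HasDerivAt (fun s => X s i j)
      ((Y t j * ∑ j' : Fin mY, U i j' * Y t j') -
        (1 / (mX : ℝ)) * ∑ i' : Fin mX, Y t j * ∑ j' : Fin mY, U i' j' * Y t j') t)
    -- gradient descent-ascent dynamics of Y
    (hY : ∀ t j, HasDerivAt (fun s => Y s j)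
      (-(((∑ i : Fin mX, U i j * (∑ j' : Fin mY, X t i j' * Y t j')) +
          ∑ i : Fin mX, X t i j * ∑ j' : Fin mY, U i j' * Y t j') -
        (1 / (mY : ℝ)) * ∑ j₂ : Fin mY,
          ((∑ i : Fin mX, U i j₂ * (∑ j' : Fin mY, X t i j' * Y t j')) +
            ∑ i : Fin mX, X t i j₂ * ∑ j' : Fin mY, U i j' * Y t j'))) t)
    -- interior Nash equilibrium (x*, y*) with value u*
    (xs : Fin mX → ℝ) (ys : Fin mY → ℝ) (ustar : ℝ)
    (hxspos : ∀ i, 0 < xs i) (hxssum : ∑ i : Fin mX, xs i = 1)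
    (hyspos : ∀ j, 0 < ys j) (hyssum : ∑ j : Fin mY, ys j = 1)
    (hNx : ∀ j, ∑ i : Fin mX, U i j * xs i = ustar)
    (hNy : ∀ i, ∑ j : Fin mY, U i j * ys j = ustar)
    (t : ℝ) (δ : Fin mX → ℝ) (hδ : ∑ i : Fin mX, δ i = 0) :
    HasDerivAt
      (fun s => ∑ i : Fin mX, ∑ i' : Fin mX, ∑ j : Fin mY,
        δ i * U i j * X s i' j * δ i')
      ((∑ i : Fin mX, ∑ j : Fin mY, δ i * U i j * (Y t j - ys j))^2) t ∧
    0 ≤ (∑ i : Fin mX, ∑ j : Fin mY, δ i * U i j * (Y t j - ys j))^2 :=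
  stmt_17_general mX mY U X Y hX ys ustar hNy t δ hδ
end
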